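/- arXiv:math/0504198 — 5 statements merged into one kernel-verified Lean document; each statement's English description precedes it below -/
import Mathlib

section
/- Every subring of a principal ideal domain is contained in a principal ideal domain which is itself a subring of the original ring and has the same cardinality as the given subring (when the subring is infinite). -/
/-!
Close `R₁` up, in ω steps, under adjoining for each pair `a, b` a gcd `g` taken in `R`, Bézout
coefficients for it, the cofactors `a / g` and `b / g`, and the inverse of `a` when `a` is a unit
of `R`. In the resulting subring `R₂` every pair has a gcd that is a linear combination of it, so
`R₂` is Bézout; and the inclusion `R₂ → R` reflects units, so a strictly decreasing chain of
divisors in `R₂` is one in `R`, which forces `R₂` to inherit the well-foundedness of divisibility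
from `R`. A Bézout domain with well-founded divisibility is a PID. Each step adjoins countably
many elements per pair, so `#R₂ ≤ max #R₁ ℵ₀`.
-/

open Cardinal

theorem Subring.cardinalMk_closure_le_max {R : Type*} [Ring R] (s : Set R) :
    #(closure s) ≤ max #s ℵ₀ := by
  have h := Algebra.lift_cardinalMk_adjoin_le ℤ s
  rw [mk_int, lift_aleph0, lift_uzero, lift_uzero] at h
  rw [(Subring.closureEquivAdjoinInt s).toEquiv.cardinal_eq]
  exact h.trans (max_le (max_le (le_max_right _ _) (le_max_left _ _)) (le_max_right _ _))

namespace Subring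

section ClosureUnder

variable {R : Type*} [Ring R] (F : R → R → Set R)

def adjoinWitnesses (S : Subring R) : Subring R :=
  closure (S ∪ ⋃ p : S × S, F p.1 p.2)

def closureUnder (t : Set R) : Subring R :=
  ⨆ n, (adjoinWitnesses F)^[n] (closure t)

theorem le_adjoinWitnesses (S : Subring R) : S ≤ adjoinWitnesses F S :=
  fun _ hx ↦ subset_closure (Or.inl hx)

theorem subset_adjoinWitnesses {S : Subring R} {a b : R} (ha : a ∈ S) (hb : b ∈ S) :
    F a b ⊆ adjoinWitnesses F S :=
  fun _ hx ↦ subset_closure (Or.inr (Set.mem_iUnion.mpr ⟨(⟨a, ha⟩, ⟨b, hb⟩), hx⟩))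

theorem monotone_iterate_adjoinWitnesses (S : Subring R) :
    Monotone fun n ↦ (adjoinWitnesses F)^[n] S :=
  monotone_nat_of_le_succ fun n ↦ by
    simpa only [Function.iterate_succ_apply'] using le_adjoinWitnesses F _

variable {F} {t : Set R}

theorem mem_closureUnder {x : R} :
    x ∈ closureUnder F t ↔ ∃ n, x ∈ (adjoinWitnesses F)^[n] (closure t) :=
  mem_iSup_of_directed (monotone_iterate_adjoinWitnesses F _).directed_le

theorem subset_closureUnder : t ⊆ closureUnder F t :=
  fun _ hx ↦ mem_closureUnder.mpr ⟨0, subset_closure hx⟩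

theorem subset_closureUnder_of_mem {a b : R} (ha : a ∈ closureUnder F t)
    (hb : b ∈ closureUnder F t) : F a b ⊆ closureUnder F t := by
  obtain ⟨m, ha⟩ := mem_closureUnder.mp ha
  obtain ⟨n, hb⟩ := mem_closureUnder.mp hb
  have hmono := monotone_iterate_adjoinWitnesses F (closure t)
  intro x hx
  refine mem_closureUnder.mpr ⟨max m n + 1, ?_⟩
  rw [Function.iterate_succ_apply']
  exact subset_adjoinWitnesses F (hmono (le_max_left m n) ha) (hmono (le_max_right m n) hb) hx

theorem cardinalMk_adjoinWitnesses_le (hF : ∀ a b, (F a b).Countable) (S : Subring R) :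
    #(adjoinWitnesses F S) ≤ max #S ℵ₀ := by
  set κ := max #S ℵ₀
  have hκ : ℵ₀ ≤ κ := le_max_right _ _
  have hwit : #(⋃ p : S × S, F p.1 p.2) ≤ κ :=
    calc #(⋃ p : S × S, F p.1 p.2)
        ≤ #(S × S) * ⨆ p : S × S, #(F p.1 p.2) := mk_iUnion_le _
      _ ≤ (κ * κ) * κ := by
          rw [mk_prod, lift_id]
          gcongr
          · exact le_max_left _ _
          · exact le_max_left _ _
          · exact ciSup_le' fun p ↦ (mk_le_aleph0_iff.mpr (hF _ _).to_subtype).trans hκ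
      _ = κ := by rw [mul_eq_self hκ, mul_eq_self hκ]
  calc #(adjoinWitnesses F S)
      ≤ max #↥((S : Set R) ∪ ⋃ p : S × S, F p.1 p.2) ℵ₀ := cardinalMk_closure_le_max _
    _ ≤ κ := max_le ((mk_union_le _ _).trans (add_le_of_le hκ (le_max_left _ _) hwit)) hκ

theorem cardinalMk_closureUnder_le (hF : ∀ a b, (F a b).Countable) :
    #(closureUnder F t) ≤ max #t ℵ₀ := by
  set κ := max #t ℵ₀
  have hκ : ℵ₀ ≤ κ := le_max_right _ _
  have hiter : ∀ n, #((adjoinWitnesses F)^[n] (closure t)) ≤ κ := by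
    intro n
    induction n with
    | zero => exact cardinalMk_closure_le_max t
    | succ n ih =>
      rw [Function.iterate_succ_apply']
      exact (cardinalMk_adjoinWitnesses_le hF _).trans (max_le ih hκ)
  have hcoe : (closureUnder F t : Set R) = ⋃ n, ((adjoinWitnesses F)^[n] (closure t) : Set R) :=
    coe_iSup_of_directed (monotone_iterate_adjoinWitnesses F _).directed_le
  calc #(closureUnder F t)
      = #(⋃ n, ((adjoinWitnesses F)^[n] (closure t) : Set R)) := by rw [← hcoe]; rfl
    _ ≤ ℵ₀ * ⨆ n, #((adjoinWitnesses F)^[n] (closure t) : Set R) := by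
        simpa using mk_iUnion_le_lift fun n ↦ ((adjoinWitnesses F)^[n] (closure t) : Set R)
    _ ≤ ℵ₀ * κ := by gcongr; exact ciSup_le' hiter
    _ = κ := aleph0_mul_eq hκ

end ClosureUnder

end Subring

theorem IsBezout.of_forall_exists_gcd {S : Type*} [CommRing S]
    (h : ∀ x y : S, ∃ g, (∃ u v, u * x + v * y = g) ∧ g ∣ x ∧ g ∣ y) : IsBezout S := by
  rw [IsBezout.iff_span_pair_isPrincipal]
  intro x y
  obtain ⟨g, ⟨u, v, huv⟩, hgx, hgy⟩ := h x y
  refine ⟨⟨g, le_antisymm ?_ ?_⟩⟩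
  · rw [Ideal.span_le, Set.pair_subset_iff]
    exact ⟨Ideal.mem_span_singleton.mpr hgx, Ideal.mem_span_singleton.mpr hgy⟩
  · rw [Submodule.span_le, Set.singleton_subset_iff]
    exact Ideal.mem_span_pair.mpr ⟨u, v, huv⟩

theorem WfDvdMonoid.of_injective_isLocalHom {α β F : Type*} [CommMonoidWithZero α]
    [CommMonoidWithZero β] [WfDvdMonoid β] [FunLike F α β] [MonoidWithZeroHomClass F α β]
    (f : F) [IsLocalHom f] (hf : Function.Injective f) : WfDvdMonoid α := by
  refine ⟨Subrelation.wf (r := InvImage DvdNotUnit f) ?_ (InvImage.wf f wellFounded_dvdNotUnit)⟩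
  rintro x y ⟨hx, z, hz, rfl⟩
  refine ⟨?_, f z, fun hfz ↦ hz (hfz.of_map f z), map_mul f x z⟩
  rw [← map_zero f]
  exact hf.ne hx

section Bezout

variable {R : Type*} [CommRing R] [IsBezout R]

noncomputable def bezoutWitnesses (a b : R) : Set R :=
  let coeffs := IsBezout.gcd_eq_sum a b
  {IsBezout.gcd a b, coeffs.choose, coeffs.choose_spec.choose,
    (IsBezout.gcd_dvd_left a b).choose, (IsBezout.gcd_dvd_right a b).choose, Ring.inverse a}

theorem bezoutWitnesses_countable (a b : R) : (bezoutWitnesses a b).Countable := by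
  simp [bezoutWitnesses]

variable {S : Subring R}

theorem Subring.isBezout_of_bezoutWitnesses_subset
    (hS : ∀ a ∈ S, ∀ b ∈ S, bezoutWitnesses a b ⊆ S) : IsBezout S := by
  refine IsBezout.of_forall_exists_gcd fun ⟨a, ha⟩ ⟨b, hb⟩ ↦ ?_
  have hmem : bezoutWitnesses a b ⊆ S := hS a ha b hb
  have hcoeffs := IsBezout.gcd_eq_sum a b
  refine ⟨⟨IsBezout.gcd a b, hmem (by simp [bezoutWitnesses])⟩,
    ⟨⟨hcoeffs.choose, hmem (by simp [bezoutWitnesses])⟩,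
      ⟨hcoeffs.choose_spec.choose, hmem (by simp [bezoutWitnesses])⟩,
      Subtype.ext hcoeffs.choose_spec.choose_spec⟩,
    ⟨⟨(IsBezout.gcd_dvd_left a b).choose, hmem (by simp [bezoutWitnesses])⟩,
      Subtype.ext (IsBezout.gcd_dvd_left a b).choose_spec⟩,
    ⟨⟨(IsBezout.gcd_dvd_right a b).choose, hmem (by simp [bezoutWitnesses])⟩,
      Subtype.ext (IsBezout.gcd_dvd_right a b).choose_spec⟩⟩

theorem Subring.isLocalHom_subtype_of_bezoutWitnesses_subset
    (hS : ∀ a ∈ S, ∀ b ∈ S, bezoutWitnesses a b ⊆ S) : IsLocalHom S.subtype := by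
  refine ⟨fun ⟨a, ha⟩ hunit ↦ ?_⟩
  have hinv : Ring.inverse a ∈ S := hS a ha a ha (by simp [bezoutWitnesses])
  exact IsUnit.of_mul_eq_one (a := ⟨a, ha⟩) ⟨_, hinv⟩
    (Subtype.ext (Ring.mul_inverse_cancel a hunit))

theorem Subring.isPrincipalIdealRing_of_bezoutWitnesses_subset [IsDomain R] [WfDvdMonoid R]
    (hS : ∀ a ∈ S, ∀ b ∈ S, bezoutWitnesses a b ⊆ S) :
    IsPrincipalIdealRing S :=
  have := isBezout_of_bezoutWitnesses_subset hS
  have := isLocalHom_subtype_of_bezoutWitnesses_subset hS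
  (IsBezout.TFAE.out 3 1).mp (WfDvdMonoid.of_injective_isLocalHom S.subtype S.subtype_injective)

end Bezout

/-- Every subring of a principal ideal domain is contained in a principal ideal
domain which is itself a subring of the original ring and has the same
cardinality as the given subring (when the subring is infinite). -/
theorem subring_of_PID_contained_in_PID_subring
    (R : Type*) [CommRing R] [IsDomain R] [IsPrincipalIdealRing R]
    (R₁ : Subring R) :
    ∃ R₂ : Subring R, R₁ ≤ R₂ ∧ IsDomain R₂ ∧ IsPrincipalIdealRing R₂ ∧
      (Infinite R₁ → Cardinal.mk R₂ = Cardinal.mk R₁) := by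
  set R₂ := Subring.closureUnder bezoutWitnesses (R₁ : Set R)
  have hR₁ : (R₁ : Set R) ⊆ R₂ := Subring.subset_closureUnder
  refine ⟨R₂, hR₁, inferInstance, Subring.isPrincipalIdealRing_of_bezoutWitnesses_subset
    fun a ha b hb ↦ Subring.subset_closureUnder_of_mem ha hb, fun _ ↦ ?_⟩
  refine le_antisymm ?_ (mk_le_mk_of_subset hR₁)
  calc #R₂ ≤ max #R₁ ℵ₀ := Subring.cardinalMk_closureUnder_le bezoutWitnesses_countable
    _ = #R₁ := max_eq_left (aleph0_le_mk _)
end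

section
/- Let R be a PID, I an ideal of a subring R₂ = R ∩ K where K is a subfield of Frac(R) containing R₂. If IR = aR with a = ir for i ∈ I, r ∈ R, then every x ∈ I satisfies x ∈ iR₂, i.e. I ⊆ iR₂. -/
/-- The cofactor is `x / i` computed in `F`, where `K` is closed under division. -/
theorem Subring.dvd_of_coe_dvd_comap_subfield {R F : Type*} [CommRing R] [Field F]
    {f : R →+* F} (hf : Function.Injective f) {K : Subfield F}
    {x i : Subring.comap f K.toSubring} (hdvd : (i : R) ∣ x) : i ∣ x := by
  obtain ⟨c, hc⟩ := hdvd
  by_cases hi : i = 0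
  · subst hi
    exact ⟨0, Subtype.ext (by simpa using hc)⟩
  have hfi : f i ≠ 0 := (map_ne_zero_iff f hf).mpr (by exact_mod_cast hi)
  have hcK : f c ∈ K := by
    have hquot : f c = f x / f i := by rw [eq_div_iff hfi, hc, map_mul, mul_comm]
    exact hquot ▸ K.div_mem x.2 i.2
  exact ⟨⟨c, hcK⟩, Subtype.ext hc⟩

theorem ideal_subset_span_of_generator_general
    (R : Type*) [CommRing R] [IsDomain R]
    (K : Subfield (FractionRing R))
    (R₂ : Subring R)
    (hR₂ : R₂ = Subring.comap (algebraMap R (FractionRing R)) K.toSubring)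
    (I : Ideal R₂) (i : R₂) (r : R)
    (hIR : Ideal.span ((fun x : R₂ => (x : R)) '' (I : Set R₂))
        = Ideal.span {(i : R) * r}) :
    I ≤ Ideal.span {i} := by
  subst hR₂
  intro x hx
  have hxIR : (x : R) ∈ Ideal.span {(i : R) * r} := hIR ▸ Ideal.subset_span ⟨x, hx, rfl⟩
  have hdvd : (i : R) ∣ x := dvd_trans (dvd_mul_right _ _) (Ideal.mem_span_singleton.mp hxIR)
  exact Ideal.mem_span_singleton.mpr
    (Subring.dvd_of_coe_dvd_comap_subfield (IsFractionRing.injective R _) hdvd)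

/-- Let `R` be a PID, `K` a subfield of `Frac R`, `R₂ = R ∩ K`, `I` an ideal of
`R₂`. If `IR = aR` with `a = i*r` for `i ∈ I`, `r ∈ R`, then every `x ∈ I`
satisfies `x ∈ i·R₂`, i.e. `I ⊆ i·R₂`. -/
theorem ideal_subset_span_of_generator
    (R : Type*) [CommRing R] [IsDomain R] [IsPrincipalIdealRing R]
    (K : Subfield (FractionRing R))
    (R₂ : Subring R)
    (hR₂ : R₂ = Subring.comap (algebraMap R (FractionRing R)) K.toSubring)
    (I : Ideal R₂) (i : R₂) (hi : i ∈ I) (r : R)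
    (hIR : Ideal.span ((fun x : R₂ => (x : R)) '' (I : Set R₂))
        = Ideal.span {(i : R) * r}) :
    I ≤ Ideal.span {i} :=
  ideal_subset_span_of_generator_general R K R₂ hR₂ I i r hIR
end

section
/- Let G be an ℵ₁-free abelian group (every countable subgroup is free), H ⊆ K ⊆ G subgroups with K/H countable and Hom(K/H, ℤ) = 0, and let Θ ∈ Hom(G, G) vanish on H. Then Θ vanishes on K. -/
/-- Let `G` be an `ℵ₁`-free abelian group (every countable subgroup is free),
`H ⊆ K ⊆ G` subgroups with `K/H` countable and `Hom(K/H, ℤ) = 0`, and let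
`Θ : G → G` be a homomorphism vanishing on `H`. Then `Θ` vanishes on `K`. -/
theorem hom_vanishes_on_K_of_vanishes_on_H
    (G : Type*) [AddCommGroup G]
    (haleph1free : ∀ S : AddSubgroup G, Countable S → Module.Free ℤ S)
    (H K : AddSubgroup G) (hHK : H ≤ K)
    (hcount : Countable (K ⧸ H.addSubgroupOf K))
    (hdual : ∀ f : (K ⧸ H.addSubgroupOf K) →+ ℤ, f = 0)
    (Θ : G →+ G) (hΘ : ∀ x ∈ H, Θ x = 0) :
    ∀ x ∈ K, Θ x = 0 := by
  set H' := H.addSubgroupOf K with hH'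
  have hφH : ∀ y ∈ H', (Θ.comp K.subtype) y = 0 := fun y hy => hΘ y hy
  let φbar : (K ⧸ H') →+ G := QuotientAddGroup.lift H' (Θ.comp K.subtype) hφH
  intro x hxK
  by_contra hne
  set S := φbar.range with hS
  have hScount : Countable S := (Set.countable_range φbar).to_subtype
  have hfree := haleph1free S hScount
  have hxS : Θ x ∈ S := ⟨QuotientAddGroup.mk ⟨x, hxK⟩, rfl⟩
  have hnt : Nontrivial S :=
    ⟨⟨⟨Θ x, hxS⟩, 0, by simpa [Subtype.ext_iff] using hne⟩⟩
  let b := Module.Free.chooseBasis ℤ S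
  obtain ⟨i⟩ := b.index_nonempty
  let f : (K ⧸ H') →+ ℤ :=
    (b.coord i).toAddMonoidHom.comp φbar.rangeRestrict
  obtain ⟨y, hy⟩ := φbar.rangeRestrict_surjective (b i)
  have h0 : (b.coord i) (b i) = 0 := by
    have := DFunLike.congr_fun (hdual f) y
    simpa [f, hy] using this
  simp [Module.Basis.coord_apply] at h0
end

section
/- Let R be a PID with countably generated fraction field Q = S⁻¹R for a countable multiplicative set S = {s_i : i ∈ ω} with s₀ = 1, and set q_n = ∏_{i≤n} s_i. If R is not a field then ⋂_{n∈ω} q_n R = 0, i.e. the S-adic topology on R is Hausdorff. -/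
/-! Pick a nonzero nonunit `p` of `R`. Since `p` becomes invertible in `S⁻¹R = Q`, it divides
some `t ∈ S`, and then every power `p ^ n` divides `t ^ n ∈ S`. Every element of `S` is some
`s k`, which divides `q k`, so an element of `⋂ q_n R` is divisible by all powers of `p`; in a
noetherian domain only `0` is. -/

theorem eq_zero_of_forall_pow_dvd {α : Type*} [CommMonoidWithZero α] [IsCancelMulZero α]
    [WfDvdMonoid α] {a b : α} (ha : ¬IsUnit a) (h : ∀ n, a ^ n ∣ b) : b = 0 := by
  by_contra hb
  exact FiniteMultiplicity.not_iff_forall.2 h (.of_not_isUnit ha hb)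

theorem IsFractionRing.exists_mem_dvd_of_isLocalization {R : Type*} [CommRing R] [IsDomain R]
    (S : Submonoid R) (K : Type*) [Field K] [Algebra R K] [IsFractionRing R K]
    [IsLocalization S K] {a : R} (ha : a ≠ 0) : ∃ t ∈ S, a ∣ t :=
  (IsLocalization.algebraMap_isUnit_iff S).1 <|
    Ne.isUnit ((IsFractionRing.to_map_eq_zero_iff (K := K)).not.2 ha)

theorem dvd_of_mem_iInf_span_prod_range {R : Type*} [CommRing R] {s q : ℕ → R}
    (hq : ∀ n, q n = ∏ i ∈ Finset.range (n + 1), s i) {x : R}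
    (hx : x ∈ ⨅ n : ℕ, Ideal.span {q n}) (k : ℕ) : s k ∣ x := by
  have hqx : q k ∣ x := Ideal.mem_span_singleton.1 (Submodule.mem_iInf _ |>.1 hx k)
  exact (hq k ▸ Finset.dvd_prod_of_mem s (Finset.self_mem_range_succ k)).trans hqx

theorem s_adic_topology_hausdorff_general
    (R : Type*) [CommRing R] [IsDomain R] [IsPrincipalIdealRing R]
    (hR : ¬ IsField R)
    (S : Submonoid R)
    (hloc : IsLocalization S (FractionRing R))
    (s : ℕ → R) (hrange : Set.range s = (S : Set R))
    (q : ℕ → R) (hq : ∀ n, q n = ∏ i ∈ Finset.range (n + 1), s i) :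
    (⨅ n : ℕ, Ideal.span {q n}) = ⊥ := by
  obtain ⟨p, hp0, hpu⟩ := Ring.exists_not_isUnit_of_not_isField hR
  obtain ⟨t, htS, hpt⟩ := IsFractionRing.exists_mem_dvd_of_isLocalization S (FractionRing R) hp0
  refine eq_bot_iff.2 fun x hx => (Submodule.mem_bot R).2 ?_
  refine eq_zero_of_forall_pow_dvd hpu fun n => ?_
  obtain ⟨k, hk⟩ : t ^ n ∈ Set.range s := hrange ▸ pow_mem htS n
  exact (pow_dvd_pow_of_dvd hpt n).trans (hk ▸ dvd_of_mem_iInf_span_prod_range hq hx k)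

/-- Let `R` be a PID (not a field) whose fraction field `Q` is `S⁻¹R` for a
countable multiplicative set `S = {s_i : i ∈ ω}` with `s₀ = 1`, and set
`q_n = ∏_{i ≤ n} s_i`. Then `⋂_{n} q_n R = 0`, i.e. the `S`-adic topology
on `R` is Hausdorff. -/
theorem s_adic_topology_hausdorff
    (R : Type*) [CommRing R] [IsDomain R] [IsPrincipalIdealRing R]
    (hR : ¬ IsField R)
    (S : Submonoid R) (hS0 : (0 : R) ∉ S)
    (hloc : IsLocalization S (FractionRing R))
    (s : ℕ → R) (hrange : Set.range s = (S : Set R)) (hs0 : s 0 = 1)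
    (q : ℕ → R) (hq : ∀ n, q n = ∏ i ∈ Finset.range (n + 1), s i) :
    (⨅ n : ℕ, Ideal.span {q n}) = ⊥ :=
  s_adic_topology_hausdorff_general R hR S hloc s hrange q hq
end

section
/- (Stein-type decomposition) Every countable torsion-free abelian group A decomposes as A = F ⊕ B where F is free and Hom(B, ℤ) = 0. -/
/-!
Let `B` be the subgroup of elements killed by every homomorphism `A → ℤ`. Then `A ⧸ B` embeds
into the power `ℤ ^ Hom(A, ℤ)`, and a countable subgroup of a power of `ℤ` is free
(Specker–Pontryagin): the pure closure of a finitely generated subgroup is seen by finitely many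
coordinates, hence is finitely generated, so an enumeration of the group yields a chain of
finitely generated pure subgroups with free successive quotients, along which bases can be
extended. The free quotient splits, `A = F ⊕ B` with `F ≅ A ⧸ B`, and a homomorphism `B → ℤ`
composed with the projection onto `B` is a homomorphism on `A`, hence vanishes on `B`.
-/

open Submodule

namespace Submodule

section Saturation

variable {R M : Type*} [CommRing R] [AddCommGroup M] [Module R M]

def saturation (N : Submodule R M) : Submodule R M :=
  (torsion R (M ⧸ N)).comap N.mkQ

variable [IsDomain R] {N : Submodule R M} {x : M}

theorem mem_saturation : x ∈ N.saturation ↔ ∃ c : R, c ≠ 0 ∧ c • x ∈ N := by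
  simp only [saturation, mem_comap, mem_torsion_iff, mkQ_apply, Submonoid.smul_def,
    ← Quotient.mk_smul, Quotient.mk_eq_zero, Subtype.exists, mem_nonZeroDivisors_iff_ne_zero,
    exists_prop]

theorem le_saturation : N ≤ N.saturation :=
  fun _ hx => mem_saturation.2 ⟨1, one_ne_zero, by simpa⟩

theorem saturation_saturation_le : N.saturation.saturation ≤ N.saturation := by
  intro x hx
  obtain ⟨c, hc, hcx⟩ := mem_saturation.1 hx
  obtain ⟨d, hd, hdcx⟩ := mem_saturation.1 hcx
  exact mem_saturation.2 ⟨d * c, mul_ne_zero hd hc, by rwa [mul_smul]⟩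

theorem saturation_bot [Module.IsTorsionFree R M] : (⊥ : Submodule R M).saturation = ⊥ := by
  refine eq_bot_iff.2 fun x hx => ?_
  obtain ⟨c, hc, hcx⟩ := mem_saturation.1 hx
  simpa [smul_eq_zero, hc] using hcx

end Saturation

section Complements

variable {R M : Type*} [Ring R] [AddCommGroup M] [Module R M]

theorem exists_isCompl_of_projective_quotient (N : Submodule R M) [Module.Projective R (M ⧸ N)] :
    ∃ C : Submodule R M, IsCompl N C ∧ Nonempty (C ≃ₗ[R] M ⧸ N) := by
  obtain ⟨σ, hσ⟩ := Module.projective_lifting_property N.mkQ LinearMap.id N.mkQ_surjective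
  have hσ' (y : M ⧸ N) : N.mkQ (σ y) = y := LinearMap.congr_fun hσ y
  have hσinj : Function.Injective σ := Function.LeftInverse.injective hσ'
  refine ⟨LinearMap.range σ, ?_, ⟨(LinearEquiv.ofInjective σ hσinj).symm⟩⟩
  let π := (σ ∘ₗ N.mkQ).codRestrict (LinearMap.range σ) fun x => LinearMap.mem_range_self σ _
  have hproj : ∀ x : LinearMap.range σ, π x = x := by
    rintro ⟨_, y, rfl⟩
    ext
    exact congrArg σ (hσ' y)
  have hker : LinearMap.ker π = N := by
    simp only [π]
    rw [LinearMap.ker_codRestrict,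
      LinearMap.ker_comp_of_ker_eq_bot _ (LinearMap.ker_eq_bot.2 hσinj), ker_mkQ]
  simpa [hker] using (LinearMap.isCompl_of_proj hproj).symm

theorem exists_free_disjoint_sup_eq {N N' : Submodule R M} (hle : N ≤ N')
    [Module.Free R (N' ⧸ N.comap N'.subtype)] :
    ∃ C : Submodule R M, Module.Free R C ∧ Disjoint N C ∧ N ⊔ C = N' := by
  obtain ⟨C, hcompl, ⟨e⟩⟩ := (N.comap N'.subtype).exists_isCompl_of_projective_quotient
  have : Module.Free R C := .of_equiv e.symm
  refine ⟨C.map N'.subtype, .of_equiv (C.equivMapOfInjective _ N'.injective_subtype), ?_, ?_⟩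
  · rw [disjoint_iff, eq_bot_iff]
    rintro _ ⟨hxN, y, hyC, rfl⟩
    have : y ∈ N.comap N'.subtype ⊓ C := ⟨hxN, hyC⟩
    simp only [hcompl.inf_eq_bot, mem_bot] at this
    simp [this]
  · apply le_antisymm (sup_le hle (map_subtype_le _ _))
    calc N' = (N.comap N'.subtype ⊔ C).map N'.subtype := by
          rw [hcompl.sup_eq_top, map_subtype_top]
      _ ≤ N ⊔ C.map N'.subtype := by
          rw [map_sup]
          exact sup_le_sup_right (map_comap_le _ _) _

end Complements

theorem exists_finset_eq_zero_of_forall_apply_eq_zero {R N ι : Type*} [Semiring R]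
    [AddCommMonoid N] [Module R N] (W : Submodule R (ι → N)) [IsArtinian R W] :
    ∃ J : Finset ι, ∀ w ∈ W, (∀ i ∈ J, w i = 0) → w = 0 := by
  classical
  let K (J : Finset ι) : Submodule R W := ⨅ i ∈ J, LinearMap.ker (LinearMap.proj i ∘ₗ W.subtype)
  have mem_K {J : Finset ι} {w : W} : w ∈ K J ↔ ∀ i ∈ J, (w : ι → N) i = 0 := by simp [K]
  obtain ⟨_, ⟨J, rfl⟩, hmin⟩ := IsArtinian.set_has_minimal (Set.range K) ⟨_, ∅, rfl⟩
  refine ⟨J, fun w hw hJ => ?_⟩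
  by_contra hne
  obtain ⟨i, hi⟩ := Function.ne_iff.1 hne
  refine hmin _ ⟨insert i J, rfl⟩ (lt_of_le_of_ne (fun v hv => ?_) fun h => ?_)
  · exact mem_K.2 fun j hj => mem_K.1 hv j (Finset.mem_insert_of_mem hj)
  · have hwK : (⟨w, hw⟩ : W) ∈ K J := mem_K.2 hJ
    rw [← h, mem_K] at hwK
    exact hi (hwK i (Finset.mem_insert_self i J))

section DomainCoefficients

variable {R M : Type*} [CommRing R] [IsDomain R] [AddCommGroup M] [Module R M]

theorem FG.saturation_of_injective [IsNoetherianRing R] {ι : Type*} {ε : M →ₗ[R] ι → R}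
    (hε : Function.Injective ε) {N : Submodule R M} (hN : N.FG) : N.saturation.FG := by
  obtain ⟨s, rfl⟩ := hN
  -- Finitely many coordinates `J` are injective on the span of `N` over the fraction field,
  -- hence on the saturation of `N`, which therefore embeds into the noetherian module `J → R`.
  let K := FractionRing R
  let η : M →ₗ[R] ι → K := (Algebra.linearMap R K).compLeft ι ∘ₗ ε
  let W : Submodule K (ι → K) := span K (η '' s)
  have : FiniteDimensional K W := FiniteDimensional.span_of_finite K (s.finite_toSet.image η)
  have hNW : span R (s : Set M) ≤ (W.restrictScalars R).comap η :=
    span_le.2 fun x hx => subset_span (Set.mem_image_of_mem η hx)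
  obtain ⟨J, hJ⟩ := W.exists_finset_eq_zero_of_forall_apply_eq_zero
  let φ : M →ₗ[R] J → R := LinearMap.funLeft R R Subtype.val ∘ₗ ε
  suffices hinj : Function.Injective (φ ∘ₗ (span R (s : Set M)).saturation.subtype) from
    Module.Finite.iff_fg.1 (Module.Finite.of_injective _ hinj)
  rw [← LinearMap.ker_eq_bot, eq_bot_iff]
  rintro ⟨x, hx⟩ hφx
  obtain ⟨c, hc, hcx⟩ := mem_saturation.1 hx
  have hεx : ∀ i ∈ J, ε x i = 0 := fun i hi => congrFun hφx ⟨i, hi⟩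
  have hηcx : η (c • x) = 0 := hJ _ (hNW hcx) fun i hi => by simp [η, hεx i hi]
  have hεcx : ε (c • x) = 0 := funext fun i =>
    IsFractionRing.injective R K (by simpa [η] using congrFun hηcx i)
  rw [map_smul, smul_eq_zero] at hεcx
  simpa using hε (by rw [hεcx.resolve_left hc, map_zero])

theorem free_quotient_comap_subtype [IsPrincipalIdealRing R] {N N' : Submodule R M}
    (hN : N.saturation ≤ N) (hN' : N'.FG) : Module.Free R (N' ⧸ N.comap N'.subtype) := by
  have : Module.Finite R N' := Module.Finite.iff_fg.2 hN'
  have : Module.IsTorsionFree R (N' ⧸ N.comap N'.subtype) := by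
    refine .of_smul_eq_zero fun c y hcy => or_iff_not_imp_left.2 fun hc => ?_
    obtain ⟨y, rfl⟩ := Quotient.mk_surjective _ y
    rw [← Quotient.mk_smul, Quotient.mk_eq_zero] at hcy
    rw [Quotient.mk_eq_zero]
    exact hN (mem_saturation.2 ⟨c, hc, hcy⟩)
  exact Module.free_of_finite_type_torsion_free'

end DomainCoefficients

end Submodule

namespace Module

section Chain

variable {R M : Type*} [Ring R] [AddCommGroup M] [Module R M]

theorem Free.of_chain {P : ℕ → Submodule R M} (hP₀ : P 0 = ⊥) (hcover : ∀ x, ∃ n, x ∈ P n)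
    (hstep : ∀ n, ∃ C : Submodule R M, Free R C ∧ Disjoint (P n) C ∧ P n ⊔ C = P (n + 1)) :
    Free R M := by
  choose C hCfree hdisj hsup using hstep
  have hbasis (n : ℕ) : ∃ u : Set M, LinearIndepOn R id u ∧ span R u = C n := by
    let b := Free.chooseBasis R (C n)
    refine ⟨Set.range ((C n).subtype ∘ b), ?_, ?_⟩
    · rw [← Set.image_univ]
      exact LinearIndepOn.image_of_comp _ id
        (linearIndepOn_univ_iff.2 (b.linearIndependent.map' _ (C n).ker_subtype))
    · rw [Set.range_comp, ← map_span, b.span_eq, map_subtype_top]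
  choose u hu hspan using hbasis
  have hacc (n : ℕ) : LinearIndepOn R id (Set.accumulate u n) ∧
      span R (Set.accumulate u n) = P (n + 1) := by
    induction n with
    | zero => simpa [hspan, ← hsup 0, hP₀] using hu 0
    | succ n ih =>
      rw [Set.accumulate_succ, span_union, ih.2, hspan, hsup]
      exact ⟨ih.1.id_union (hu _) (by rw [ih.2, hspan]; exact hdisj _), rfl⟩
  have hli : LinearIndepOn R id (⋃ n, Set.accumulate u n) :=
    linearIndepOn_iUnion_of_directed Set.monotone_accumulate.directed_le fun n => (hacc n).1
  refine .of_basis (Basis.mk hli ?_)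
  rintro x -
  obtain ⟨n, hx⟩ := hcover x
  have hx' : x ∈ span R (Set.accumulate u n) := (hacc n).2 ▸ (hsup n ▸ le_sup_left) hx
  simp only [id, Subtype.range_coe]
  exact span_mono (Set.subset_iUnion _ n) hx'

end Chain

variable {R M : Type*} [CommRing R] [AddCommGroup M] [Module R M]

theorem Dual.eq_zero_of_isCompl {B C : Submodule R M} (hB : ∀ φ : Dual R M, B ≤ LinearMap.ker φ)
    (h : IsCompl B C) (f : Dual R B) : f = 0 := by
  ext x
  simpa [projectionOnto_apply_left] using hB (f ∘ₗ B.projectionOnto C h) x.2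

variable [IsDomain R] [IsPrincipalIdealRing R]

theorem free_of_countable_of_forall_fg_saturation [Countable M] [IsTorsionFree R M]
    (h : ∀ N : Submodule R M, N.FG → N.saturation.FG) : Free R M := by
  obtain ⟨q, hq⟩ := exists_surjective_nat M
  let P (n : ℕ) : Submodule R M := Nat.rec ⊥ (fun n Pn => (Pn ⊔ span R {q n}).saturation) n
  have hsat (n : ℕ) : (P n).saturation ≤ P n := by
    cases n with
    | zero => exact saturation_bot.le
    | succ n => exact saturation_saturation_le
  have hfg (n : ℕ) : (P n).FG := by
    induction n with
    | zero => exact fg_bot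
    | succ n ih => exact h _ (ih.sup (fg_span_singleton _))
  have hle (n : ℕ) : P n ⊔ span R {q n} ≤ P (n + 1) := le_saturation
  refine Free.of_chain (P := P) rfl (fun x => ?_) fun n => ?_
  · obtain ⟨n, rfl⟩ := hq x
    exact ⟨n + 1, hle n (mem_sup_right (mem_span_singleton_self _))⟩
  · have := free_quotient_comap_subtype (hsat n) (hfg (n + 1))
    exact exists_free_disjoint_sup_eq (le_sup_left.trans (hle n))

theorem free_of_injective_pi [Countable M] {ι : Type*} {ε : M →ₗ[R] ι → R}
    (hε : Function.Injective ε) : Free R M :=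
  have := hε.moduleIsTorsionFree ε (map_smul ε)
  free_of_countable_of_forall_fg_saturation fun _ hN => hN.saturation_of_injective hε

theorem exists_isCompl_free_forall_dual_eq_zero [Countable M] :
    ∃ F B : Submodule R M, IsCompl F B ∧ Free R F ∧ ∀ f : Dual R B, f = 0 := by
  let e : M →ₗ[R] Dual R M → R := LinearMap.pi fun φ => φ
  have : Countable (LinearMap.range e) := e.surjective_rangeRestrict.countable
  have : Free R (LinearMap.range e) := free_of_injective_pi (LinearMap.range e).injective_subtype
  have : Free R (M ⧸ LinearMap.ker e) := .of_equiv e.quotKerEquivRange.symm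
  obtain ⟨F, hcompl, ⟨eF⟩⟩ := (LinearMap.ker e).exists_isCompl_of_projective_quotient
  refine ⟨F, LinearMap.ker e, hcompl.symm, .of_equiv eF.symm,
    Dual.eq_zero_of_isCompl (fun φ => ?_) hcompl⟩
  rw [LinearMap.ker_pi]
  exact iInf_le _ φ

end Module

theorem stein_decomposition_general
    (A : Type*) [AddCommGroup A] [Countable A] :
    ∃ F B : AddSubgroup A, IsCompl F B ∧ Module.Free ℤ F ∧
      ∀ f : B →+ ℤ, f = 0 := by
  obtain ⟨F, B, hcompl, hF, hB⟩ := Module.exists_isCompl_free_forall_dual_eq_zero (R := ℤ) (M := A)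
  refine ⟨F.toAddSubgroup, B.toAddSubgroup, AddSubgroup.toIntSubmodule.symm.isCompl_iff.1 hcompl,
    .of_equiv (AddEquiv.refl F).toIntLinearEquiv, fun f => ?_⟩
  ext x
  exact LinearMap.congr_fun (hB f.toIntLinearMap) x

/-- (Stein-type decomposition) Every countable torsion-free abelian group `A`
decomposes as `A = F ⊕ B` where `F` is free and `Hom(B, ℤ) = 0`. -/
theorem stein_decomposition
    (A : Type*) [AddCommGroup A] [Countable A] [NoZeroSMulDivisors ℤ A] :
    ∃ F B : AddSubgroup A, IsCompl F B ∧ Module.Free ℤ F ∧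
      ∀ f : B →+ ℤ, f = 0 :=
  stein_decomposition_general A
end
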